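/- arXiv:2001.11665 — 2 statements merged into one kernel-verified Lean document; each statement's English description precedes it below -/
import Mathlib

section
/- For all integers 0 ≤ k ≤ n, C_s(n,k) = ∑_{i ≥ 0} C(n-i, k) · binom(k, i)_{s-1}, where C(a,b) is the ordinary binomial coefficient (zero when a < 0, b < 0, or b > a) and binom(k,i)_{s-1} is the bi^{s-1}-nomial coefficient. (For s = 1, binom(k,i)_0 equals 1 if i = 0 and 0 otherwise.) -/
/-- The quasi-bi^s-nomial coefficients `C_s(n,k)`. -/
def quasi (s : ℕ) : ℕ → ℤ → ℤ
  | 0, k => if k = 0 then 1 else 0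
  | n+1, k =>
    if k < 0 ∨ (n+1 : ℤ) < k then 0
    else quasi s n k + ∑ j ∈ Finset.range s, if j ≤ n then quasi s (n - j) (k - 1) else 0
  termination_by n _ => n
  decreasing_by all_goals omega

/-- Binomial coefficient `C(a,b)` with integer upper argument, zero when `a < 0`
(and, as usual, zero when `b > a ≥ 0`). -/
def ichoose (a : ℤ) (b : ℕ) : ℤ :=
  if a < 0 then 0 else (a.toNat.choose b : ℤ)

/-- The bi^t-nomial coefficient `binom(n,k)_t`: the coefficient of `x^k` in
`(1 + x + ⋯ + x^t)^n`. -/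
noncomputable def bis (t n k : ℕ) : ℕ :=
  (((∑ r ∈ Finset.range (t + 1), Polynomial.X ^ r : Polynomial ℕ)) ^ n).coeff k

lemma ichoose_neg {a : ℤ} (h : a < 0) (b : ℕ) : ichoose a b = 0 := by simp [ichoose, h]

lemma ichoose_eq_zero {a : ℤ} {b : ℕ} (h : a < b) : ichoose a b = 0 := by
  unfold ichoose
  split
  · rfl
  · rename_i h'
    rw [Nat.choose_eq_zero_of_lt (by omega)]; simp

lemma ichoose_pascal (a : ℤ) (k : ℕ) :
    ichoose a (k+1) = ichoose (a-1) (k+1) + ichoose (a-1) k := by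
  unfold ichoose
  split
  · rename_i h
    rw [if_pos (by omega), if_pos (by omega)]; simp
  · rename_i h
    by_cases h1 : a - 1 < 0
    · have : a = 0 := by omega
      subst this
      simp [Nat.choose_eq_zero_of_lt]
    · rw [if_neg h1, if_neg h1]
      have : a.toNat = (a-1).toNat + 1 := by omega
      rw [this, Nat.choose_succ_succ']
      push_cast; ring

lemma quasi_neg (s n : ℕ) {k : ℤ} (hk : k < 0) : quasi s n k = 0 := by
  cases n with
  | zero => simp [quasi]; omega
  | succ n => rw [quasi, if_pos (Or.inl hk)]

lemma pcoeff (t a : ℕ) : (∑ r ∈ Finset.range (t + 1), Polynomial.X ^ r : Polynomial ℕ).coeff a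
    = if a ≤ t then 1 else 0 := by
  rw [Polynomial.finset_sum_coeff]
  simp [Polynomial.coeff_X_pow, Nat.lt_succ_iff]

lemma bis_zero (t i : ℕ) : bis t 0 i = if i = 0 then 1 else 0 := by
  simp [bis, Polynomial.coeff_one, eq_comm]

lemma bis_succ (t k i : ℕ) : bis t (k+1) i
    = ∑ a ∈ Finset.range (i+1), (if a ≤ t then 1 else 0) * bis t k (i - a) := by
  unfold bis
  rw [pow_succ', Polynomial.coeff_mul, Finset.Nat.sum_antidiagonal_eq_sum_range_succ_mk]
  simp [pcoeff, Nat.lt_succ_iff]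

lemma bis_k_zero (t k : ℕ) : bis t k 0 = 1 := by
  induction k with
  | zero => simp [bis_zero]
  | succ k ih => rw [bis_succ]; simp [ih, Finset.filter_singleton]

noncomputable def G (s k n : ℕ) : ℤ := ∑ i ∈ Finset.range (n+1), ichoose ((n:ℤ) - i) k * (bis (s-1) k i : ℤ)

lemma G_zero (s n : ℕ) : G s 0 n = 1 := by
  simp only [G, bis_zero]
  rw [Finset.sum_eq_single 0]
  · simp [ichoose, Nat.choose]
  · intro b _ hb; simp [hb]
  · intro h; simp at h

lemma G_eq_zero_of_lt {s k n : ℕ} (h : n < k) : G s k n = 0 := by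
  apply Finset.sum_eq_zero
  intro i _
  rw [ichoose_eq_zero (by omega), zero_mul]

lemma G_rec (s k n : ℕ) (hs : 1 ≤ s) :
    G s (k+1) (n+1) = G s (k+1) n + ∑ j ∈ Finset.range s, (if j ≤ n then G s k (n-j) else 0) := by
  have e1 : G s (k+1) (n+1)
      = (∑ i ∈ Finset.range (n+2), ichoose ((n:ℤ) - i) (k+1) * (bis (s-1) (k+1) i : ℤ))
      + (∑ i ∈ Finset.range (n+2), ichoose ((n:ℤ) - i) k * (bis (s-1) (k+1) i : ℤ)) := by
    rw [G, ← Finset.sum_add_distrib]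
    apply Finset.sum_congr rfl
    intro i _
    rw [show ((n+1:ℕ):ℤ) - i = ((n:ℤ) - i) + 1 by push_cast; ring,
        show ((n:ℤ) - i) + 1 = ((n:ℤ) - i + 1) by ring, ichoose_pascal,
        show (n:ℤ) - i + 1 - 1 = (n:ℤ) - i by ring, add_mul]
  have e2 : (∑ i ∈ Finset.range (n+2), ichoose ((n:ℤ) - i) (k+1) * (bis (s-1) (k+1) i : ℤ))
      = G s (k+1) n := by
    rw [Finset.sum_range_succ, ichoose_neg (by push_cast; omega), zero_mul, add_zero, G]
  have e3 : (∑ i ∈ Finset.range (n+2), ichoose ((n:ℤ) - i) k * (bis (s-1) (k+1) i : ℤ))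
      = ∑ i ∈ Finset.range (n+2), ∑ a ∈ Finset.range (n+2),
          (if a ≤ i then (if a ≤ s-1 then (1:ℤ) else 0)
            * (ichoose ((n:ℤ) - i) k * (bis (s-1) k (i-a) : ℤ)) else 0) := by
    apply Finset.sum_congr rfl
    intro i hi
    simp only [Finset.mem_range] at hi
    rw [bis_succ]
    push_cast
    rw [Finset.mul_sum]
    rw [← Finset.sum_subset (Finset.range_subset_range.mpr (show i+1 ≤ n+2 by omega))
        (fun a _ ha => if_neg (by simp only [Finset.mem_range] at ha; omega))]
    apply Finset.sum_congr rfl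
    intro a ha
    simp only [Finset.mem_range] at ha
    rw [if_pos (show a ≤ i by omega)]
    ring
  have e4 : ∀ a ∈ Finset.range (n+2),
      (∑ i ∈ Finset.range (n+2), (if a ≤ i then (if a ≤ s-1 then (1:ℤ) else 0)
        * (ichoose ((n:ℤ) - i) k * (bis (s-1) k (i-a) : ℤ)) else 0))
      = (if a < s ∧ a ≤ n then G s k (n-a) else 0) := by
    intro a ha
    simp only [Finset.mem_range] at ha
    have hfil : Finset.filter (fun i => a ≤ i) (Finset.range (n+2)) = Finset.Ico a (n+2) := by
      ext x; simp; omega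
    rw [← Finset.sum_filter, hfil, Finset.sum_Ico_eq_sum_range, ← Finset.mul_sum]
    simp only [Nat.add_sub_cancel_left]
    by_cases han : a ≤ n
    · by_cases has : a ≤ s - 1
      · rw [if_pos has, one_mul, if_pos ⟨by omega, han⟩]
        rw [show n + 2 - a = (n-a) + 1 + 1 by omega, Finset.sum_range_succ]
        rw [ichoose_neg (by push_cast; omega), zero_mul, add_zero, G]
        apply Finset.sum_congr rfl
        intro i' _
        congr 2
        omega
      · rw [if_neg has, if_neg (show ¬(a < s ∧ a ≤ n) by omega), zero_mul]
    · rw [show n + 2 - a = 1 by omega, Finset.sum_range_one,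
          ichoose_neg (by push_cast; omega), zero_mul, mul_zero,
          if_neg (show ¬(a < s ∧ a ≤ n) by omega)]
  rw [e1, e2, e3, Finset.sum_comm, Finset.sum_congr rfl e4]
  congr 1
  rw [Finset.sum_subset (Finset.range_subset_range.mpr (show n+2 ≤ n+2+s by omega))
      (fun x _ hx => if_neg (by simp only [Finset.mem_range] at hx; omega))]
  rw [show (∑ j ∈ Finset.range s, (if j ≤ n then G s k (n-j) else 0))
      = ∑ j ∈ Finset.range s, (if j < s ∧ j ≤ n then G s k (n-j) else 0) from
      Finset.sum_congr rfl (fun j hj => by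
        simp only [Finset.mem_range] at hj
        by_cases h : j ≤ n <;> simp [h, hj])]
  rw [Finset.sum_subset (Finset.range_subset_range.mpr (show s ≤ n+2+s by omega))
      (fun x _ hx => if_neg (by simp only [Finset.mem_range] at hx; omega))]

lemma quasi_eq_G (s : ℕ) (hs : 1 ≤ s) : ∀ n (k : ℕ), quasi s n (k : ℤ) = G s k n := by
  intro n
  induction n using Nat.strong_induction_on with
  | _ n IH =>
    intro k
    match n with
    | 0 =>
      rw [quasi]
      match k with
      | 0 => simp [G, ichoose, bis_k_zero]
      | k+1 =>
        rw [if_neg (by push_cast; omega), G]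
        simp [ichoose, bis_k_zero, Nat.choose_eq_zero_of_lt]
    | Nat.succ n =>
      rw [quasi]
      by_cases hk : n + 1 < k
      · rw [if_pos (by push_cast; omega), G_eq_zero_of_lt hk]
      · rw [if_neg (by push_cast; omega)]
        match k with
        | 0 =>
          have hz : ∀ j ∈ Finset.range s,
              (if j ≤ n then quasi s (n-j) (((0:ℕ):ℤ) - 1) else 0) = 0 := by
            intro j _
            split
            · exact quasi_neg s (n-j) (by omega)
            · rfl
          rw [Finset.sum_congr rfl hz, Finset.sum_const_zero, add_zero,
              IH n (by omega) 0, G_zero, G_zero]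
        | k'+1 =>
          rw [show ((k'+1:ℕ):ℤ) - 1 = (k' : ℤ) by push_cast; ring]
          rw [IH n (by omega) (k'+1)]
          have hsum : ∀ j ∈ Finset.range s,
              (if j ≤ n then quasi s (n-j) (k' : ℤ) else 0)
              = (if j ≤ n then G s k' (n-j) else 0) := by
            intro j _
            split
            · exact IH (n-j) (by omega) k'
            · rfl
          rw [Finset.sum_congr rfl hsum, ← G_rec s k' n hs]

/-- For `0 ≤ k ≤ n`: `C_s(n,k) = ∑_{i ≥ 0} C(n-i, k) · binom(k, i)_{s-1}`. -/
theorem quasi_eq_sum_binomial_bis (s n k : ℕ) (hs : 1 ≤ s) (hk : k ≤ n) :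
    quasi s n (k : ℤ) = ∑ᶠ i : ℕ, ichoose ((n : ℤ) - i) k * (bis (s - 1) k i : ℤ) := by
  rw [quasi_eq_G s hs n k, G]
  symm
  apply finsum_eq_finset_sum_of_support_subset
  intro i hi
  simp only [Function.mem_support] at hi
  simp only [Finset.coe_range, Set.mem_Iio]
  by_contra h
  exact hi (by rw [ichoose_neg (by omega), zero_mul])
end

section
/- Let s ≥ 2. For all integers 0 ≤ k ≤ n, the following identity holds in ℚ: (C_s(n,k) : ℚ) = ∑ C(k, j_1) C(j_1, j_2) ⋯ C(j_{s-2}, j_{s-1}) · C(n - k - (j_1 + ⋯ + j_{s-2}), j_{s-1}) · 2^{j_1} (3/2)^{j_2} (4/3)^{j_3} ⋯ (s/(s-1))^{j_{s-1}}, where the sum runs over all (s-1)-tuples (j_1, …, j_{s-1}) of natural numbers and C(a,b) denotes the ordinary binomial coefficient (zero when a < 0, b < 0, or b > a). -/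
/-- The chain of binomial coefficients `C(k, j_1) C(j_1, j_2) ⋯ C(j_{m-1}, j_m)`
for a tuple `j = (j_1, …, j_m)` (indexed from `0` in Lean). -/
def chain (k : ℕ) {m : ℕ} (j : Fin m → ℕ) : ℕ :=
  ∏ i : Fin m,
    Nat.choose
      (if i.val = 0 then k
       else j ⟨i.val - 1, Nat.lt_of_le_of_lt (Nat.sub_le _ _) i.isLt⟩)
      (j i)


open Finset PowerSeries

section Quasi

variable (s : ℕ)

lemma quasi_of_neg : ∀ (n : ℕ) {k : ℤ}, k < 0 → quasi s n k = 0
  | 0, k, hk => by rw [quasi, if_neg (by omega)]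
  | n + 1, k, hk => by rw [quasi, if_pos (Or.inl hk)]

lemma quasi_of_lt : ∀ {n : ℕ} {k : ℤ}, (n : ℤ) < k → quasi s n k = 0
  | 0, k, hk => by rw [quasi, if_neg (by omega)]
  | n + 1, k, hk => by rw [quasi, if_pos (Or.inr (by exact_mod_cast hk))]

lemma quasi_succ (n : ℕ) (k : ℤ) :
    quasi s (n + 1) k =
      quasi s n k + ∑ j ∈ range s, if j ≤ n then quasi s (n - j) (k - 1) else 0 := by
  rw [quasi]
  split_ifs with h
  · have h₁ : quasi s n k = 0 := h.elim (quasi_of_neg s n) fun h => quasi_of_lt s (by omega)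
    have h₂ : ∀ j ≤ n, quasi s (n - j) (k - 1) = 0 := fun j _ =>
      h.elim (fun h => quasi_of_neg s _ (by omega)) fun h => quasi_of_lt s (by omega)
    simp +contextual [h₁, h₂]
  · rfl

lemma quasi_zero_right (n : ℕ) : quasi s n 0 = 1 := by
  induction n with
  | zero => rw [quasi, if_pos rfl]
  | succ n ih => simp +contextual [quasi_succ, ih, quasi_of_neg]

end Quasi

lemma chain_eq_prod (a : ℕ) {m : ℕ} (j : Fin m → ℕ) :
    chain a j = ∏ i, ((Fin.cons a j : Fin (m + 1) → ℕ) (Fin.castSucc i) : ℕ).choose (j i) := by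
  refine prod_congr rfl fun ⟨i, hi⟩ _ => ?_
  cases i with
  | zero => rfl
  | succ i =>
    exact congrArg (Nat.choose · _) (Fin.cons_succ (α := fun _ => ℕ) a j ⟨i, by omega⟩).symm

lemma chain_cons (a j₀ : ℕ) {m : ℕ} (j : Fin m → ℕ) :
    chain a (Fin.cons j₀ j : Fin (m + 1) → ℕ) = a.choose j₀ * chain j₀ j := by
  simp only [chain_eq_prod, Fin.prod_univ_succ, Fin.castSucc_zero, Fin.cons_zero,
    ← Fin.succ_castSucc, Fin.cons_succ]

lemma chain_empty (a : ℕ) (j : Fin 0 → ℕ) : chain a j = 1 := by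
  simp [chain]

lemma le_of_chain_ne_zero {a : ℕ} : ∀ {m : ℕ} {j : Fin m → ℕ}, chain a j ≠ 0 → ∀ t, j t ≤ a
  | 0, _, _, t => t.elim0
  | m + 1, j, h, t => by
    induction j using Fin.consCases with
    | cons j₀ j =>
      rw [chain_cons, mul_ne_zero_iff, Ne, Nat.choose_eq_zero_iff, not_lt] at h
      induction t using Fin.cases with
      | zero => exact h.1
      | succ t => exact (le_of_chain_ne_zero h.2 t).trans h.1

lemma finsum_pi_fin_succ {α M : Type*} [AddCommMonoid M] {m : ℕ} (f : (Fin (m + 1) → α) → M)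
    (hf : Function.HasFiniteSupport f) :
    ∑ᶠ j, f j = ∑ᶠ (j₀ : α) (j : Fin m → α), f (Fin.cons j₀ j) := by
  rw [← finsum_comp_equiv (Fin.consEquiv fun _ => α)]
  exact finsum_curry _ (hf.preimage (Fin.consEquiv _).injective.injOn)

lemma finsum_eq_sum_range_of_gt {M : Type*} [AddCommMonoid M] (a : ℕ) {f : ℕ → M}
    (hf : ∀ j, a < j → f j = 0) : ∑ᶠ j, f j = ∑ j ∈ range (a + 1), f j :=
  finsum_eq_sum_of_support_subset f fun j hj => by
    simpa [Nat.lt_succ_iff] using not_lt.mp (mt (hf j) hj)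

lemma ichoose_natCast (a b : ℕ) : ichoose a b = a.choose b := by
  simp [ichoose]

lemma ichoose_of_neg {a : ℤ} (ha : a < 0) (b : ℕ) : ichoose a b = 0 :=
  if_pos ha

section NestedSum

variable {R : Type*} [CommRing R]

def nestedTerm (c : ℕ → R) (m a : ℕ) (b : ℤ) (j : Fin (m + 1) → ℕ) : R :=
  (chain a j : R) *
    (ichoose (b - ∑ t : Fin (m + 1), if t.val < m then (j t : ℤ) else 0) (j (Fin.last m)) : R) *
    ∏ t : Fin (m + 1), c t ^ j t

noncomputable def nestedSum (c : ℕ → R) (m a : ℕ) (b : ℤ) : R :=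
  ∑ᶠ j, nestedTerm c m a b j

lemma nestedTerm_zero_cons (c : ℕ → R) (a : ℕ) (b : ℤ) (j₀ : ℕ) (j : Fin 0 → ℕ) :
    nestedTerm c 0 a b (Fin.cons j₀ j) = a.choose j₀ * c 0 ^ j₀ * ichoose b j₀ := by
  simp only [nestedTerm, Nat.reduceAdd, chain_cons, chain_empty, mul_one, univ_unique,
    Fin.default_eq_zero, Fin.val_eq_zero, lt_self_iff_false, ↓reduceIte, sum_const_zero, sub_zero,
    Fin.last_zero, Fin.cons_zero, prod_singleton]
  ring

lemma nestedTerm_succ_cons (c : ℕ → R) (m a : ℕ) (b : ℤ) (j₀ : ℕ) (j : Fin (m + 1) → ℕ) :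
    nestedTerm c (m + 1) a b (Fin.cons j₀ j) =
      a.choose j₀ * c 0 ^ j₀ * nestedTerm (fun t => c (t + 1)) m j₀ (b - j₀) j := by
  simp only [nestedTerm, chain_cons, Fin.sum_univ_succ (n := m + 1),
    Fin.prod_univ_succ (n := m + 1), Fin.cons_zero, Fin.cons_succ, Fin.cons_last, Fin.val_zero,
    Fin.val_succ, Nat.add_lt_add_iff_right]
  push_cast
  rw [if_pos (Nat.succ_pos m), sub_add_eq_sub_sub]
  ring

lemma hasFiniteSupport_nestedTerm (c : ℕ → R) (m a : ℕ) (b : ℤ) :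
    Function.HasFiniteSupport (nestedTerm c m a b) := by
  refine (Fintype.piFinset fun _ => range (a + 1)).finite_toSet.subset fun j hj => ?_
  have hchain : chain a j ≠ 0 := fun h => hj (by simp [nestedTerm, h])
  simpa [Nat.lt_succ_iff] using le_of_chain_ne_zero hchain

lemma nestedSum_of_neg (c : ℕ → R) (m a : ℕ) {b : ℤ} (hb : b < 0) : nestedSum c m a b = 0 := by
  refine finsum_eq_zero_of_forall_eq_zero fun j => ?_
  have hsum : 0 ≤ ∑ t : Fin (m + 1), if t.val < m then (j t : ℤ) else 0 :=
    sum_nonneg fun t _ => by split_ifs <;> positivity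
  simp [nestedTerm, ichoose_of_neg (show b - _ < 0 by linarith)]

lemma nestedSum_zero (c : ℕ → R) (a : ℕ) (b : ℤ) :
    nestedSum c 0 a b = ∑ j₀ ∈ range (a + 1), a.choose j₀ * c 0 ^ j₀ * ichoose b j₀ := by
  rw [nestedSum, finsum_pi_fin_succ _ (hasFiniteSupport_nestedTerm c 0 a b)]
  simp only [nestedTerm_zero_cons, finsum_unique]
  exact finsum_eq_sum_range_of_gt a fun j hj => by simp [Nat.choose_eq_zero_of_lt hj]

lemma nestedSum_succ (c : ℕ → R) (m a : ℕ) (b : ℤ) :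
    nestedSum c (m + 1) a b = ∑ j₀ ∈ range (a + 1),
      a.choose j₀ * c 0 ^ j₀ * nestedSum (fun t => c (t + 1)) m j₀ (b - j₀) := by
  rw [nestedSum, finsum_pi_fin_succ _ (hasFiniteSupport_nestedTerm c (m + 1) a b)]
  simp only [nestedTerm_succ_cons]
  rw [finsum_eq_sum_range_of_gt a fun j hj => by simp [Nat.choose_eq_zero_of_lt hj]]
  exact sum_congr rfl fun j₀ _ => (mul_finsum' _ _ (hasFiniteSupport_nestedTerm _ _ _ _)).symm

end NestedSum

section NestedSeries

variable {R : Type*} [CommRing R]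

noncomputable def nestedPoly : (ℕ → R) → ℕ → R⟦X⟧
  | _, 0 => 1
  | c, m + 1 => C (c 0) * X * nestedPoly (fun t => c (t + 1)) m + (1 - X)

noncomputable def nestedSeries (c : ℕ → R) (m a : ℕ) : R⟦X⟧ :=
  nestedPoly c m ^ a * (invOneSubPow R (a + 1) : R⟦X⟧)

lemma nestedSeries_zero (c : ℕ → R) (a : ℕ) :
    nestedSeries c 0 a = (invOneSubPow R (a + 1) : R⟦X⟧) := by
  simp [nestedSeries, nestedPoly]

lemma nestedSeries_succ (c : ℕ → R) (m a : ℕ) :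
    nestedSeries c (m + 1) a = ∑ j ∈ range (a + 1),
      C (a.choose j * c 0 ^ j) * (X ^ j * nestedSeries (fun t => c (t + 1)) m j) := by
  rw [nestedSeries, nestedPoly, add_pow, sum_mul]
  refine sum_congr rfl fun j hj => ?_
  have hU : (1 - X : R⟦X⟧) ^ (a - j) * (invOneSubPow R (a + 1) : R⟦X⟧) =
      invOneSubPow R (j + 1) := by
    rw [show a + 1 = j + 1 + (a - j) by grind]
    exact one_sub_pow_mul_invOneSubPow_val_add_eq_invOneSubPow_val R (j + 1) (a - j)
  rw [nestedSeries, ← hU, map_mul, map_natCast, map_pow]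
  ring

lemma coeff_nestedSeries_succ (c : ℕ → R) (m a b : ℕ) :
    coeff b (nestedSeries c (m + 1) a) = ∑ j ∈ range (a + 1), a.choose j * c 0 ^ j *
      if j ≤ b then coeff (b - j) (nestedSeries (fun t => c (t + 1)) m j) else 0 := by
  simp only [nestedSeries_succ, map_sum, coeff_C_mul, coeff_X_pow_mul']

lemma coeff_nestedSeries (m : ℕ) :
    ∀ (c : ℕ → R) (a b : ℕ), coeff b (nestedSeries c (m + 1) a) = nestedSum c m a b := by
  induction m with
  | zero =>
    intro c a b
    rw [coeff_nestedSeries_succ, nestedSum_zero]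
    refine sum_congr rfl fun j _ => ?_
    rw [nestedSeries_zero, invOneSubPow_val_succ_eq_mk_add_choose, coeff_mk, ichoose_natCast]
    split_ifs with hj
    · rw [Nat.add_sub_cancel' hj, Int.cast_natCast]
    · rw [Nat.choose_eq_zero_of_lt (not_le.mp hj)]
      simp
  | succ m ih =>
    intro c a b
    rw [coeff_nestedSeries_succ, nestedSum_succ]
    refine sum_congr rfl fun j _ => ?_
    split_ifs with hj
    · rw [ih, Nat.cast_sub hj]
    · rw [nestedSum_of_neg _ _ _ (by omega), mul_zero]

end NestedSeries

section Ratio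

variable {K : Type*} [Field K]

lemma C_mul_nestedPoly_ratio (m : ℕ) :
    ∀ (r : K), (∀ t : ℕ, r + t ≠ 0) →
      C r * nestedPoly (fun t : ℕ => (r + t + 1) / (r + t)) m =
        C (r - 1) + ∑ i ∈ range (m + 1), X ^ i := by
  induction m with
  | zero =>
    intro r _
    simp only [nestedPoly, mul_one, zero_add, range_one, sum_singleton, pow_zero, map_sub, map_one]
    ring
  | succ m ih =>
    intro r hr
    have hr₀ : r ≠ 0 := by simpa using hr 0
    have hshift : (fun t : ℕ => (r + ((t + 1 : ℕ) : K) + 1) / (r + ((t + 1 : ℕ) : K))) =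
        fun t : ℕ => (r + 1 + t + 1) / (r + 1 + t) := by
      funext t
      push_cast
      ring_nf
    have hC : C r * C ((r + 1) / r) = (C (r + 1) : K⟦X⟧) := by
      rw [← map_mul, mul_div_cancel₀ _ hr₀]
    have hsum : ∑ i ∈ range (m + 2), (X : K⟦X⟧) ^ i = X * ∑ i ∈ range (m + 1), X ^ i + 1 := by
      rw [sum_range_succ', mul_sum]
      simp only [pow_succ', pow_zero]
    have ih' := ih (r + 1) fun t => by simpa [add_assoc, add_comm (1 : K)] using hr (t + 1)
    rw [nestedPoly, hshift, hsum]
    set P := nestedPoly (fun t : ℕ => (r + 1 + t + 1) / (r + 1 + t)) m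
    simp only [Nat.cast_zero, add_zero, add_sub_cancel_right, map_sub, map_one] at ih' ⊢
    linear_combination X * ih' + X * P * hC

lemma nestedPoly_ratio [CharZero K] (m : ℕ) :
    nestedPoly (fun t : ℕ => ((t : K) + 2) / ((t : K) + 1)) m = ∑ i ∈ range (m + 1), X ^ i := by
  have h := C_mul_nestedPoly_ratio m (1 : K) fun t => by
    rw [add_comm]; exact Nat.cast_add_one_ne_zero t
  simp only [map_one, one_mul, sub_self, map_zero, zero_add] at h
  rw [← h]
  congr 1
  funext t
  ring_nf

end Ratio

section QuasiSeries

variable (R : Type*) [CommRing R] (s : ℕ)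

noncomputable def quasiSeries (k : ℤ) : R⟦X⟧ :=
  PowerSeries.mk fun n => (quasi s n k : R)

lemma one_sub_X_mul_quasiSeries_zero : (1 - X) * quasiSeries R s 0 = 1 := by
  have h : quasiSeries R s 0 = PowerSeries.mk 1 := by
    ext n
    simp [quasiSeries, quasi_zero_right]
  rw [h, mul_comm, mk_one_mul_one_sub_eq_one]

lemma quasiSeries_eq_X_mul {k : ℤ} (hk : k ≠ 0) :
    quasiSeries R s k =
      X * (quasiSeries R s k + (∑ i ∈ range s, X ^ i) * quasiSeries R s (k - 1)) := by
  ext n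
  rcases n with _ | n
  · rw [coeff_zero_X_mul, quasiSeries, coeff_mk, quasi, if_neg hk, Int.cast_zero]
  · simp only [coeff_succ_X_mul, map_add, sum_mul, map_sum, coeff_X_pow_mul', quasiSeries, coeff_mk,
      quasi_succ, Int.cast_add, Int.cast_sum, apply_ite (Int.cast : ℤ → R), Int.cast_zero]

lemma one_sub_X_pow_mul_quasiSeries (k : ℕ) :
    (1 - X) ^ (k + 1) * quasiSeries R s k = X ^ k * (∑ i ∈ range s, X ^ i) ^ k := by
  induction k with
  | zero => rw [zero_add, pow_one, Nat.cast_zero, one_sub_X_mul_quasiSeries_zero]; ring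
  | succ k ih =>
    have h := quasiSeries_eq_X_mul R s (k := (k + 1 : ℕ)) (by omega)
    rw [Nat.cast_succ, add_sub_cancel_right] at h
    rw [Nat.cast_succ]
    linear_combination (1 - X) ^ (k + 1) * h + X * (∑ i ∈ range s, X ^ i) * ih

lemma quasi_eq_coeff {n k : ℕ} (hk : k ≤ n) :
    (quasi s n k : R) =
      coeff (n - k) ((∑ i ∈ range s, X ^ i) ^ k * (invOneSubPow R (k + 1) : R⟦X⟧)) := by
  have hU : (invOneSubPow R (k + 1) : R⟦X⟧) * (1 - X) ^ (k + 1) = 1 := by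
    rw [← invOneSubPow_inv_eq_one_sub_pow]
    exact (invOneSubPow R (k + 1)).val_inv
  have h : quasiSeries R s k =
      X ^ k * ((∑ i ∈ range s, X ^ i) ^ k * (invOneSubPow R (k + 1) : R⟦X⟧)) := by
    linear_combination (invOneSubPow R (k + 1) : R⟦X⟧) * one_sub_X_pow_mul_quasiSeries R s k
      - quasiSeries R s k * hU
  simpa [quasiSeries, coeff_X_pow_mul', hk] using congrArg (coeff n) h

end QuasiSeries

-- The paper's `j_i` is `j (i - 1)` here.
/-- For `s ≥ 2` and `0 ≤ k ≤ n`, in `ℚ`: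
`C_s(n,k) = ∑ C(k,j_1) C(j_1,j_2) ⋯ C(j_{s-2},j_{s-1}) C(n-k-(j_1+⋯+j_{s-2}), j_{s-1})
  · 2^{j_1} (3/2)^{j_2} ⋯ (s/(s-1))^{j_{s-1}}`,
the sum over all `(s-1)`-tuples of natural numbers (indexed from `0` in Lean, so
the paper's `j_i` is `j (i-1)` and the factor for index `i = t+1` is `((t+2)/(t+1))^{j t}`). -/
theorem quasi_nested_rational_identity (s n k : ℕ) (hs : 2 ≤ s) (hk : k ≤ n) :
    (quasi s n (k : ℤ) : ℚ) =
      ∑ᶠ j : Fin (s - 1) → ℕ,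
        (chain k j : ℚ) *
          (ichoose ((n : ℤ) - k - ∑ t : Fin (s - 1), (if t.val < s - 2 then (j t : ℤ) else 0))
            (j ⟨s - 2, by omega⟩) : ℚ) *
          ∏ t : Fin (s - 1), ((((t : ℕ) : ℚ) + 2) / (((t : ℕ) : ℚ) + 1)) ^ (j t) := by
  obtain ⟨m, rfl⟩ : ∃ m, s = m + 2 := ⟨s - 2, by omega⟩
  calc (quasi (m + 2) n k : ℚ)
      = coeff (n - k) (nestedSeries (fun t : ℕ => ((t : ℚ) + 2) / ((t : ℚ) + 1)) (m + 1) k) := by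
        rw [quasi_eq_coeff ℚ (m + 2) hk, nestedSeries, nestedPoly_ratio]
    _ = nestedSum (fun t : ℕ => ((t : ℚ) + 2) / ((t : ℚ) + 1)) m k (n - k : ℕ) :=
        coeff_nestedSeries m _ k (n - k)
    _ = _ := by rw [Nat.cast_sub hk]; rfl
end
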